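/- For 0 < q < 1 and n ≥ 1, the sum S(n) = 2 ∑_{m=1}^{n} ∑_{k_1 + ⋯ + k_m = n, k_i ≥ 1} [k_1+1]_q² ⋯ [k_m+1]_q² satisfies S(n) ≥ 2 q^{-2n} (1-q⁴)² · q^{-2}/(q^{-1}-q)² · (2 + 2q² + q⁴)^{n-1}. -/

import Mathlib

open Finset

noncomputable def qnum (q : ℝ) (n : ℕ) : ℝ := (q⁻¹ ^ n - q ^ n) / (q⁻¹ - q)

noncomputable def S (q : ℝ) (n : ℕ) : ℝ :=
  2 * ∑ c : Composition n, (c.blocks.map (fun k => qnum q (k + 1) ^ 2)).prod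

noncomputable def gg (q : ℝ) (n : ℕ) : ℝ :=
  ∑ c : Composition n, (c.blocks.map (fun k => qnum q (k + 1) ^ 2)).prod

def compSplit (n : ℕ) (hn : 0 < n) : Composition n ≃ Σ k : Fin n, Composition k where
  toFun c := by
    refine ⟨⟨c.blocks.tail.sum, ?_⟩, ⟨c.blocks.tail, fun hi => c.blocks_pos (List.mem_of_mem_tail hi), rfl⟩⟩
    have hne : c.blocks ≠ [] := by
      intro h
      have := c.blocks_sum
      rw [h] at this; simp at this; omega
    rcases List.exists_cons_of_ne_nil hne with ⟨a, l, hl⟩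
    have hpos : 0 < a := c.blocks_pos (by rw [hl]; exact List.mem_cons_self (a := a) (l := l))
    have hsum := c.blocks_sum
    rw [hl] at hsum ⊢
    simp only [List.sum_cons] at hsum
    simp only [List.tail_cons]
    omega
  invFun x := ⟨(n - x.1) :: x.2.blocks, by
      intro i hi
      rcases List.mem_cons.1 hi with h | h
      · subst h; have := x.1.2; omega
      · exact x.2.blocks_pos h, by
      simp only [List.sum_cons, x.2.blocks_sum]
      have := x.1.2; omega⟩
  left_inv c := by
    have hne : c.blocks ≠ [] := by
      intro h
      have := c.blocks_sum
      rw [h] at this; simp at this; omega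
    rcases List.exists_cons_of_ne_nil hne with ⟨a, l, hl⟩
    have hsum := c.blocks_sum
    rw [hl] at hsum
    simp only [List.sum_cons] at hsum
    ext1
    simp only [hl, List.tail_cons]
    congr 1
    omega
  right_inv := by
    rintro ⟨⟨k, hk⟩, d⟩
    rcases d with ⟨bl, hpos, hsum⟩
    simp only at hsum
    subst hsum
    rfl

lemma gg_zero (q : ℝ) : gg q 0 = 1 := by
  rw [gg]
  have h : ∀ c : Composition 0, c.blocks = [] := by
    intro c
    cases h : c.blocks with
    | nil => rfl
    | cons a l =>
      exfalso
      have ha : 0 < a := c.blocks_pos (h ▸ List.mem_cons_self (a := a) (l := l))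
      have hs := c.blocks_sum
      rw [h] at hs
      simp [List.sum_cons] at hs
      omega
  rw [Fintype.sum_eq_single (Composition.ones 0)]
  · rw [h (Composition.ones 0)]; simp
  · intro c hc
    exact absurd (Composition.ext (by rw [h c, h (Composition.ones 0)])) hc

lemma gg_rec (q : ℝ) (n : ℕ) (hn : 0 < n) :
    gg q n = ∑ k ∈ range n, qnum q (n - k + 1) ^ 2 * gg q k := by
  rw [gg, ← Equiv.sum_comp (compSplit n hn).symm
    (fun c => (c.blocks.map (fun k => qnum q (k + 1) ^ 2)).prod)]
  rw [← Finset.univ_sigma_univ, Finset.sum_sigma]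
  rw [← Fin.sum_univ_eq_sum_range (fun k => qnum q (n - k + 1) ^ 2 * gg q k) n]
  apply Finset.sum_congr rfl
  intro k _
  have : ∀ d : Composition (k : ℕ),
      ((compSplit n hn).symm ⟨k, d⟩).blocks = (n - (k : ℕ)) :: d.blocks := fun d => rfl
  simp only [this, List.map_cons, List.prod_cons, gg, Finset.mul_sum]

lemma aux_id (c s t r : ℝ) (ht : t * s = 1) (hr : s + c = r) (n : ℕ) :
    c * t * s ^ (n + 1) + ∑ k ∈ range n, c ^ 2 * t * s ^ (n - k) * r ^ k = c * r ^ n := by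
  induction n with
  | zero => simp; linear_combination c * ht
  | succ n ih =>
    rw [Finset.sum_range_succ]
    have hshift : ∑ k ∈ range n, c ^ 2 * t * s ^ (n + 1 - k) * r ^ k
        = s * ∑ k ∈ range n, c ^ 2 * t * s ^ (n - k) * r ^ k := by
      rw [Finset.mul_sum]
      apply Finset.sum_congr rfl
      intro k hk
      have hk' : k < n := Finset.mem_range.1 hk
      have : n + 1 - k = (n - k) + 1 := by omega
      rw [this, pow_succ]
      ring
    rw [hshift]
    have key : c * t * s ^ (n + 1 + 1) + (s * ∑ k ∈ range n, c ^ 2 * t * s ^ (n - k) * r ^ k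
        + c ^ 2 * t * s ^ (n + 1 - n) * r ^ n)
        = s * (c * t * s ^ (n + 1) + ∑ k ∈ range n, c ^ 2 * t * s ^ (n - k) * r ^ k)
          + c ^ 2 * (t * s) * r ^ n := by
      have : n + 1 - n = 1 := by omega
      rw [this]; ring
    rw [key, ih, ht, ← hr]; ring

lemma qden_pos (q : ℝ) (hq : 0 < q) (hq1 : q < 1) : 0 < q⁻¹ - q := by
  have h1 : 1 < q⁻¹ := (one_lt_inv_iff₀).2 ⟨hq, hq1⟩
  linarith

lemma qnum_lb (q : ℝ) (hq : 0 < q) (hq1 : q < 1) (m : ℕ) (hm : 1 ≤ m) :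
    q⁻¹ ^ m * (1 + q ^ 2) ≤ qnum q (m + 1) := by
  obtain ⟨j, rfl⟩ : ∃ j, m = j + 1 := ⟨m - 1, by omega⟩
  have hq0 : q ≠ 0 := ne_of_gt hq
  have hden := qden_pos q hq hq1
  rw [qnum, le_div_iff₀ hden]
  have key : q⁻¹ ^ (j + 1) * (1 + q ^ 2) * (q⁻¹ - q)
      = q⁻¹ ^ (j + 1 + 1) - q ^ 2 * q⁻¹ ^ j := by
    linear_combination q⁻¹ ^ j * (q * q⁻¹ - q ^ 2) * (mul_inv_cancel₀ hq0)
  rw [key]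
  have hle : q ^ j ≤ q⁻¹ ^ j := by
    apply pow_le_pow_left₀ (le_of_lt hq)
    nlinarith [qden_pos q hq hq1]
  have : q ^ (j + 1 + 1) = q ^ 2 * q ^ j := by ring
  nlinarith [sq_nonneg q]

lemma gg_lb (q : ℝ) (hq : 0 < q) (hq1 : q < 1) :
    ∀ n, 1 ≤ n →
      q⁻¹ ^ 2 * (1 + q ^ 2) ^ 2 * (2 * q⁻¹ ^ 2 + 2 + q ^ 2) ^ (n - 1) ≤ gg q n := by
  have hq0 : q ≠ 0 := ne_of_gt hq
  have h1 : q⁻¹ ^ 2 * q ^ 2 = 1 := by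
    rw [← mul_pow, inv_mul_cancel₀ hq0, one_pow]
  have hts : q ^ 2 * (q⁻¹ ^ 2) = 1 := by linarith [h1]
  have hsc : q⁻¹ ^ 2 + q⁻¹ ^ 2 * (1 + q ^ 2) ^ 2 = 2 * q⁻¹ ^ 2 + 2 + q ^ 2 := by
    linear_combination (2 + q ^ 2) * h1
  have hw : ∀ j, 1 ≤ j →
      (q⁻¹ ^ 2 * (1 + q ^ 2) ^ 2) * q ^ 2 * (q⁻¹ ^ 2) ^ j ≤ qnum q (j + 1) ^ 2 := by
    intro j hj
    have heq : (q⁻¹ ^ 2 * (1 + q ^ 2) ^ 2) * q ^ 2 * (q⁻¹ ^ 2) ^ j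
        = (q⁻¹ ^ j * (1 + q ^ 2)) ^ 2 := by
      rw [← pow_mul, mul_comm 2 j, pow_mul]
      linear_combination ((1 + q ^ 2) ^ 2 * ((q⁻¹ ^ j) ^ 2)) * h1
    rw [heq]
    apply pow_le_pow_left₀ (by positivity) (qnum_lb q hq hq1 j hj)
  intro n
  induction n using Nat.strong_induction_on with
  | _ n ih =>
    intro hn
    obtain ⟨m, rfl⟩ : ∃ m, n = m + 1 := ⟨n - 1, by omega⟩
    rw [gg_rec q (m + 1) (by omega), Finset.sum_range_succ']
    simp only [Nat.add_sub_cancel]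
    have h0 : (q⁻¹ ^ 2 * (1 + q ^ 2) ^ 2) * q ^ 2 * (q⁻¹ ^ 2) ^ (m + 1)
        ≤ qnum q (m + 1 - 0 + 1) ^ 2 * gg q 0 := by
      rw [gg_zero, mul_one, Nat.sub_zero]
      exact hw (m + 1) (by omega)
    have hterm : ∀ k ∈ range m,
        (q⁻¹ ^ 2 * (1 + q ^ 2) ^ 2) ^ 2 * q ^ 2 * (q⁻¹ ^ 2) ^ (m - k)
            * (2 * q⁻¹ ^ 2 + 2 + q ^ 2) ^ k
          ≤ qnum q (m + 1 - (k + 1) + 1) ^ 2 * gg q (k + 1) := by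
      intro k hk
      have hk' : k < m := Finset.mem_range.1 hk
      have hsub : m + 1 - (k + 1) = m - k := by omega
      rw [hsub]
      have hb1 := hw (m - k) (by omega)
      have hb2 : (q⁻¹ ^ 2 * (1 + q ^ 2) ^ 2) * (2 * q⁻¹ ^ 2 + 2 + q ^ 2) ^ k
          ≤ gg q (k + 1) := by
        have := ih (k + 1) (by omega) (by omega)
        simpa using this
      calc (q⁻¹ ^ 2 * (1 + q ^ 2) ^ 2) ^ 2 * q ^ 2 * (q⁻¹ ^ 2) ^ (m - k)
            * (2 * q⁻¹ ^ 2 + 2 + q ^ 2) ^ k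
          = ((q⁻¹ ^ 2 * (1 + q ^ 2) ^ 2) * q ^ 2 * (q⁻¹ ^ 2) ^ (m - k))
            * ((q⁻¹ ^ 2 * (1 + q ^ 2) ^ 2) * (2 * q⁻¹ ^ 2 + 2 + q ^ 2) ^ k) := by
            ring
        _ ≤ qnum q (m - k + 1) ^ 2 * gg q (k + 1) := by
            apply mul_le_mul hb1 hb2 (by positivity) (by positivity)
    calc q⁻¹ ^ 2 * (1 + q ^ 2) ^ 2 * (2 * q⁻¹ ^ 2 + 2 + q ^ 2) ^ m
        = (q⁻¹ ^ 2 * (1 + q ^ 2) ^ 2) * (q ^ 2) * (q⁻¹ ^ 2) ^ (m + 1)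
          + ∑ k ∈ range m, (q⁻¹ ^ 2 * (1 + q ^ 2) ^ 2) ^ 2 * q ^ 2
            * (q⁻¹ ^ 2) ^ (m - k) * (2 * q⁻¹ ^ 2 + 2 + q ^ 2) ^ k :=
          (aux_id (q⁻¹ ^ 2 * (1 + q ^ 2) ^ 2) (q⁻¹ ^ 2) (q ^ 2)
            (2 * q⁻¹ ^ 2 + 2 + q ^ 2) hts hsc m).symm
      _ = (∑ k ∈ range m, (q⁻¹ ^ 2 * (1 + q ^ 2) ^ 2) ^ 2 * q ^ 2
            * (q⁻¹ ^ 2) ^ (m - k) * (2 * q⁻¹ ^ 2 + 2 + q ^ 2) ^ k)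
          + (q⁻¹ ^ 2 * (1 + q ^ 2) ^ 2) * (q ^ 2) * (q⁻¹ ^ 2) ^ (m + 1) :=
          add_comm _ _
      _ ≤ (∑ k ∈ range m, qnum q (m + 1 - (k + 1) + 1) ^ 2 * gg q (k + 1))
            + qnum q (m + 1 - 0 + 1) ^ 2 * gg q 0 :=
          add_le_add (Finset.sum_le_sum hterm) h0

theorem stmt_16 (q : ℝ) (hq : 0 < q) (hq1 : q < 1) (n : ℕ) (hn : 1 ≤ n) :
    2 * q⁻¹ ^ (2 * n) * (1 - q ^ 4) ^ 2 * (q⁻¹ ^ 2 / (q⁻¹ - q) ^ 2) *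
      (2 + 2 * q ^ 2 + q ^ 4) ^ (n - 1) ≤ S q n := by
  have hq0 : q ≠ 0 := ne_of_gt hq
  have hden := qden_pos q hq hq1
  have hden' : q⁻¹ - q ≠ 0 := ne_of_gt hden
  have h1 : q⁻¹ ^ 2 * q ^ 2 = 1 := by
    rw [← mul_pow, inv_mul_cancel₀ hq0, one_pow]
  obtain ⟨m, rfl⟩ : ∃ m, n = m + 1 := ⟨n - 1, by omega⟩
  have hS : S q (m + 1) = 2 * gg q (m + 1) := rfl
  have hmain := gg_lb q hq hq1 (m + 1) (by omega)
  simp only [Nat.add_sub_cancel] at hmain ⊢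
  have heq : 2 * q⁻¹ ^ (2 * (m + 1)) * (1 - q ^ 4) ^ 2 * (q⁻¹ ^ 2 / (q⁻¹ - q) ^ 2) *
      (2 + 2 * q ^ 2 + q ^ 4) ^ m
      = 2 * (q⁻¹ ^ 2 * (1 + q ^ 2) ^ 2 * (2 * q⁻¹ ^ 2 + 2 + q ^ 2) ^ m) := by
    have hr : 2 * q⁻¹ ^ 2 + 2 + q ^ 2 = q⁻¹ ^ 2 * (2 + 2 * q ^ 2 + q ^ 4) := by
      linear_combination (-2 - q ^ 2) * h1
    have hq2 : (1 - q ^ 2) ≠ 0 := by nlinarith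
    have hfree : 2 * q⁻¹ ^ 2 * (1 - q ^ 4) ^ 2 * (q⁻¹ ^ 2 / (q⁻¹ - q) ^ 2)
        = 2 * (q⁻¹ ^ 2 * (1 + q ^ 2) ^ 2) := by
      have e1 : q⁻¹ - q = q⁻¹ * (1 - q ^ 2) := by field_simp
      have e2 : q⁻¹ ^ 2 / (q⁻¹ ^ 2 * (1 - q ^ 2) ^ 2) = 1 / (1 - q ^ 2) ^ 2 := by
        rw [div_eq_div_iff
          (mul_ne_zero (pow_ne_zero 2 (inv_ne_zero hq0)) (pow_ne_zero 2 hq2))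
          (pow_ne_zero 2 hq2)]
        ring
      have e3 : (1 - q ^ 4) ^ 2 = (1 + q ^ 2) ^ 2 * (1 - q ^ 2) ^ 2 := by ring
      rw [e1, mul_pow, e2, e3]
      calc 2 * q⁻¹ ^ 2 * ((1 + q ^ 2) ^ 2 * (1 - q ^ 2) ^ 2) * (1 / (1 - q ^ 2) ^ 2)
          = 2 * (q⁻¹ ^ 2 * (1 + q ^ 2) ^ 2) * ((1 - q ^ 2) ^ 2 * (1 / (1 - q ^ 2) ^ 2)) := by
            ring
        _ = 2 * (q⁻¹ ^ 2 * (1 + q ^ 2) ^ 2) := by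
            rw [one_div, mul_inv_cancel₀ (pow_ne_zero 2 hq2), mul_one]
    rw [hr, mul_pow, show 2 * (m + 1) = 2 + 2 * m by ring, pow_add, pow_mul]
    calc 2 * (q⁻¹ ^ 2 * (q⁻¹ ^ 2) ^ m) * (1 - q ^ 4) ^ 2 * (q⁻¹ ^ 2 / (q⁻¹ - q) ^ 2) *
          (2 + 2 * q ^ 2 + q ^ 4) ^ m
        = (2 * q⁻¹ ^ 2 * (1 - q ^ 4) ^ 2 * (q⁻¹ ^ 2 / (q⁻¹ - q) ^ 2)) *
          ((q⁻¹ ^ 2) ^ m * (2 + 2 * q ^ 2 + q ^ 4) ^ m) := by ring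
      _ = 2 * (q⁻¹ ^ 2 * (1 + q ^ 2) ^ 2) *
          ((q⁻¹ ^ 2) ^ m * (2 + 2 * q ^ 2 + q ^ 4) ^ m) := by rw [hfree]
      _ = 2 * (q⁻¹ ^ 2 * (1 + q ^ 2) ^ 2 *
          ((q⁻¹ ^ 2) ^ m * (2 + 2 * q ^ 2 + q ^ 4) ^ m)) := by ring
  rw [hS, heq]
  linarith [hmain]
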